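/- Let (V,E) be an infinite digraph with countable vertex set and let Q be a finitely decomposable acyclic flow on (V,E) with div Q = μ₁ − μ₂ for probability measures μ₁, μ₂ on V. Then there exists a coupling ρ between μ₁ and μ₂ such that ∑_{x≠y} ρ(x,y) = (1/2) ∑_{x∈V} |μ₁(x) − μ₂(x)|, and ρ(x,y) = 0 whenever x ≠ y and there is no directed path from x to y in (V,E(Q)). -/

import Mathlib

open scoped BigOperators

variable {V : Type*}

/-- A directed path in the digraph `(V, E)`: a nonempty list of vertices whose
consecutive pairs are directed edges. -/
def IsDipath (E : Set (V × V)) (l : List V) : Prop :=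
  l ≠ [] ∧ l.Chain' (fun a b => (a, b) ∈ E)

/-- The list of directed edges of a path. -/
def pathEdges (l : List V) : List (V × V) := l.zip l.tail

/-- The unit flow `Q_γ` along a path: `1` on the edges of the path and `0` elsewhere. -/
noncomputable def pathFlow (l : List V) : V × V → ℝ :=
  Set.indicator {e | e ∈ pathEdges l} 1

/-- A flow on the digraph `(V, E)`: nonnegative and supported on `E`. -/
def IsFlow (E : Set (V × V)) (Q : V × V → ℝ) : Prop :=
  (∀ e, 0 ≤ Q e) ∧ ∀ e, e ∉ E → Q e = 0

/-- The divergence of a flow at a vertex. -/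
noncomputable def divergence (Q : V × V → ℝ) (x : V) : ℝ :=
  (∑' y, Q (x, y)) - ∑' y, Q (y, x)

/-- A relation is acyclic if it has no directed cycles. -/
def AcyclicRel (r : V → V → Prop) : Prop := ∀ x, ¬ Relation.TransGen r x x

/-- The edge relation of a digraph. -/
def edgeRel (E : Set (V × V)) : V → V → Prop := fun a b => (a, b) ∈ E

/-- The partial order induced by an acyclic digraph: `x ≤ y` iff `x = y` or there is
a directed path from `x` to `y`. -/
def inducedLE (E : Set (V × V)) : V → V → Prop :=
  Relation.ReflTransGen (edgeRel E)

/-- A finitely decomposable flow: a pointwise sum `∑ₙ qₙ Q_{γₙ}` over finite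
self-avoiding directed paths with summable nonnegative weights. -/
def FinDecomposable (E : Set (V × V)) (Q : V × V → ℝ) : Prop :=
  ∃ (γ : ℕ → List V) (q : ℕ → ℝ),
    (∀ n, IsDipath E (γ n)) ∧ (∀ n, (γ n).Nodup) ∧ (∀ n, 0 ≤ q n) ∧ Summable q ∧
    ∀ e, Q e = ∑' n, q n * pathFlow (γ n) e

/-- A probability measure on a countable set, as a nonnegative function of total sum `1`. -/
def IsProb (μ : V → ℝ) : Prop := (∀ x, 0 ≤ μ x) ∧ HasSum μ 1

/-- A coupling of `μ₁` and `μ₂`: a probability on `V × V` with the given marginals. -/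
def IsCoupling (μ₁ μ₂ : V → ℝ) (ρ : V × V → ℝ) : Prop :=
  (∀ p, 0 ≤ ρ p) ∧ (∀ x, HasSum (fun y => ρ (x, y)) (μ₁ x)) ∧
    ∀ y, HasSum (fun x => ρ (x, y)) (μ₂ y)

/-- Stochastic domination: `∑ f μ₁ ≤ ∑ f μ₂` for every bounded increasing `f`. -/
def StochDom (le : V → V → Prop) (μ₁ μ₂ : V → ℝ) : Prop :=
  ∀ f : V → ℝ, (∃ C, ∀ x, |f x| ≤ C) → (∀ x y, le x y → f x ≤ f y) →
    ∑' x, f x * μ₁ x ≤ ∑' x, f x * μ₂ x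

/-- Finite-case divergence. -/
noncomputable def divergenceF [Fintype V] (Q : V × V → ℝ) (x : V) : ℝ :=
  (∑ y, Q (x, y)) - ∑ y, Q (y, x)

/-- Probability measure on a finite set. -/
def IsProbF [Fintype V] (μ : V → ℝ) : Prop := (∀ x, 0 ≤ μ x) ∧ ∑ x, μ x = 1

/-- Coupling on a finite set. -/
def IsCouplingF [Fintype V] (μ₁ μ₂ : V → ℝ) (ρ : V × V → ℝ) : Prop :=
  (∀ p, 0 ≤ ρ p) ∧ (∀ x, ∑ y, ρ (x, y) = μ₁ x) ∧ ∀ y, ∑ x, ρ (x, y) = μ₂ y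

/-- Stochastic domination on a finite set. -/
def StochDomF [Fintype V] (le : V → V → Prop) (μ₁ μ₂ : V → ℝ) : Prop :=
  ∀ f : V → ℝ, (∀ x y, le x y → f x ≤ f y) → ∑ x, f x * μ₁ x ≤ ∑ x, f x * μ₂ x

/-- The cost of a path: the sum of the weights of its edges. -/
noncomputable def pathCost (w : V × V → ℝ) (l : List V) : ℝ := ((pathEdges l).map w).sum

/-- The geodesic cost associated to a weight function on a digraph. -/
noncomputable def geoCost (E : Set (V × V)) (w : V × V → ℝ) (x y : V) : ℝ :=
  sInf {r | ∃ l, IsDipath E l ∧ l.head? = some x ∧ l.getLast? = some y ∧ pathCost w l = r}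

/-!
View the decomposition `Q = ∑ qₙ Q_{γₙ}` as jumps `aₙ ⟶ bₙ` from the first to the last vertex
of `γₙ`, of weight `qₙ`. Each self-avoiding path has divergence `δ_{aₙ} - δ_{bₙ}`, so
`div Q = α - β`, where `α v` (`β v`) is the total weight of the jumps leaving (entering) `v`; for
the excesses `ν₁ = (μ₁ - μ₂)⁺` and `ν₂ = (μ₂ - μ₁)⁺` this reads `ν₁ + β = ν₂ + α`.

Put the mass `ν₁ x` at each `x` and let it travel: mass leaving `v` is split among the jumps out
of `v` in proportion to their weights, and of the mass arriving at `v` the fraction `ν₂ v / β v`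
stops there while the fraction `min (α v) (β v) / β v` moves on. By induction on the number of
jumps, the total mass ever leaving `v` is at most `α v`. As `∑ α = ∑ q < ∞`, the moving mass
tends to zero, so all of it stops, at most `ν₂ y` at each `y`, hence exactly `ν₂ y` since the
totals agree. Mass only moves along paths of positive flow. Keeping `min μ₁ μ₂` on the diagonal
turns this plan into a coupling whose off-diagonal mass is `∑ ν₁ = ½ ∑ |μ₁ - μ₂|`.
-/

open scoped ENNReal Classical

theorem ENNReal.tsum_eq_of_succ_add_eq {m s : ℕ → ℝ≥0∞} (h : ∀ k, m (k + 1) + s k = m k)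
    (hm : ∑' k, m k ≠ ⊤) : ∑' k, s k = m 0 := by
  have partial_sum : ∀ K, ∑ k ∈ Finset.range K, s k + m K = m 0 := by
    intro K
    induction K with
    | zero => simp
    | succ K ih => rw [Finset.sum_range_succ, add_assoc, add_comm (s K), h, ih]
  have hlim := (ENNReal.tendsto_nat_tsum s).add (ENNReal.tendsto_atTop_zero_of_tsum_ne_top hm)
  rw [add_zero] at hlim
  exact tendsto_nhds_unique hlim (by simp only [partial_sum, tendsto_const_nhds])

theorem ENNReal.eq_of_le_of_tsum_eq {α : Type*} {f g : α → ℝ≥0∞} (hle : ∀ i, f i ≤ g i)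
    (hsum : ∑' i, f i = ∑' i, g i) (hfin : ∑' i, g i ≠ ⊤) (i : α) : f i = g i := by
  by_contra hne
  exact (ENNReal.tsum_lt_tsum (hsum ▸ hfin) hle (lt_of_le_of_ne (hle i) hne)).ne hsum

namespace EconomicCoupling

variable {V : Type*}

noncomputable def massAt (a : ℕ → V) (g : ℕ → ℝ≥0∞) (v : V) : ℝ≥0∞ :=
  ∑' n, if a n = v then g n else 0

section MassAt

variable {a : ℕ → V}

lemma tsum_massAt (a : ℕ → V) (g : ℕ → ℝ≥0∞) : ∑' v, massAt a g v = ∑' n, g n := by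
  simp only [massAt]
  rw [ENNReal.tsum_comm]
  simp

lemma massAt_le_tsum (a : ℕ → V) (g : ℕ → ℝ≥0∞) (v : V) : massAt a g v ≤ ∑' n, g n :=
  ENNReal.tsum_le_tsum fun n => by split_ifs <;> simp

lemma massAt_mono {g g' : ℕ → ℝ≥0∞} (h : ∀ n, g n ≤ g' n) (v : V) :
    massAt a g v ≤ massAt a g' v :=
  ENNReal.tsum_le_tsum fun n => by split_ifs <;> simp [h n]

lemma massAt_tsum {ι : Type*} (g : ι → ℕ → ℝ≥0∞) (v : V) :
    massAt a (fun n => ∑' i, g i n) v = ∑' i, massAt a (g i) v := by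
  simp only [massAt]
  rw [ENNReal.tsum_comm]
  exact tsum_congr fun n => by split_ifs <;> simp

lemma massAt_sum {ι : Type*} (s : Finset ι) (g : ι → ℕ → ℝ≥0∞) (v : V) :
    massAt a (fun n => ∑ i ∈ s, g i n) v = ∑ i ∈ s, massAt a (g i) v := by
  simp only [massAt]
  rw [← Summable.tsum_finsetSum fun _ _ => ENNReal.summable]
  exact tsum_congr fun n => by split_ifs <;> simp

lemma massAt_mul_comp (g : ℕ → ℝ≥0∞) (h : V → ℝ≥0∞) (v : V) :
    massAt a (fun n => g n * h (a n)) v = massAt a g v * h v := by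
  simp only [massAt]
  rw [← ENNReal.tsum_mul_right]
  exact tsum_congr fun n => by split_ifs with hn <;> simp [hn]

lemma exists_of_massAt_ne_zero {g : ℕ → ℝ≥0∞} {v : V} (h : massAt a g v ≠ 0) :
    ∃ n, a n = v ∧ g n ≠ 0 := by
  by_contra! hall
  exact h (ENNReal.tsum_eq_zero.mpr fun n => by split_ifs with hn <;> simp [hall n, hn])

end MassAt

lemma add_min_eq_of_add_eq_add {x y A B : ℝ≥0∞} (hmin : min x y = 0) (hbal : x + B = y + A) :
    x + min A B = A := by
  rcases min_eq_iff.mp hmin with ⟨rfl, -⟩ | ⟨rfl, -⟩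
  · rw [zero_add] at hbal
    rw [zero_add, min_eq_left (hbal ▸ le_add_self)]
  · rw [zero_add] at hbal
    rw [min_eq_right (hbal ▸ le_add_self), hbal]

section Transport

variable {a b : ℕ → V} {q : ℕ → ℝ≥0∞} {ν₁ ν₂ : V → ℝ≥0∞} {R : V → V → Prop}
  (hq : ∑' n, q n ≠ ⊤) (hbal : ∀ v, ν₁ v + massAt b q v = ν₂ v + massAt a q v)
  (hmin : ∀ v, min (ν₁ v) (ν₂ v) = 0) (hR : ∀ n, q n ≠ 0 → Relation.ReflTransGen R (a n) (b n))

variable (a b q) in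
noncomputable def transfer (U : V → ℝ≥0∞) : V → ℝ≥0∞ :=
  massAt b fun n => q n * (U (a n) / massAt a q (a n))

lemma transfer_le_massAt {U : V → ℝ≥0∞} (h : ∀ v, U v ≤ massAt a q v) (v : V) :
    transfer a b q U v ≤ massAt b q v :=
  massAt_mono (fun n => mul_le_of_le_one_right' (ENNReal.div_le_of_le_mul (by simpa using h (a n))))
    v

lemma transfer_tsum {ι : Type*} (U : ι → V → ℝ≥0∞) (v : V) :
    transfer a b q (fun u => ∑' i, U i u) v = ∑' i, transfer a b q (U i) v := by
  simp only [transfer, ← massAt_tsum, div_eq_mul_inv, ENNReal.tsum_mul_right,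
    ENNReal.tsum_mul_left]

lemma transfer_sum {ι : Type*} (s : Finset ι) (U : ι → V → ℝ≥0∞) (v : V) :
    transfer a b q (fun u => ∑ i ∈ s, U i u) v = ∑ i ∈ s, transfer a b q (U i) v := by
  simp only [transfer, ← massAt_sum, div_eq_mul_inv, Finset.sum_mul, Finset.mul_sum]

include hq in
lemma tsum_transfer {U : V → ℝ≥0∞} (h : ∀ v, U v ≤ massAt a q v) :
    ∑' v, transfer a b q U v = ∑' v, U v :=
  calc ∑' v, transfer a b q U v = ∑' n, q n * (U (a n) / massAt a q (a n)) := tsum_massAt b _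
    _ = ∑' v, massAt a q v * (U v / massAt a q v) := by
      rw [← tsum_massAt a]
      exact tsum_congr fun v => massAt_mul_comp q (fun u => U u / massAt a q u) v
    _ = ∑' v, U v := tsum_congr fun v => ENNReal.mul_div_cancel'
      (fun h0 => le_antisymm (h0 ▸ h v) zero_le)
      (fun htop => absurd htop (ne_top_of_le_ne_top hq (massAt_le_tsum a q v)))

include hR in
lemma reflTransGen_of_transfer_ne_zero {x v : V} {U : V → ℝ≥0∞}
    (hU : ∀ u, U u ≠ 0 → Relation.ReflTransGen R x u) (h : transfer a b q U v ≠ 0) :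
    Relation.ReflTransGen R x v := by
  obtain ⟨n, rfl, hn⟩ := exists_of_massAt_ne_zero h
  obtain ⟨hqn, hdiv⟩ := mul_ne_zero_iff.mp hn
  have hUn : U (a n) ≠ 0 := (ENNReal.div_ne_zero.mp hdiv).1
  exact (hU _ hUn).trans (hR n hqn)

variable (a b q) in
noncomputable def keepRate (v : V) : ℝ≥0∞ := min (massAt a q v) (massAt b q v) / massAt b q v

variable (a b q) in
/-- The part of the initial mass `U₀` that leaves `v` after `k` jumps. -/
noncomputable def launched (U₀ : V → ℝ≥0∞) : ℕ → V → ℝ≥0∞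
  | 0 => U₀
  | k + 1 => fun v => keepRate a b q v * transfer a b q (launched U₀ k) v

lemma launched_tsum {ι : Type*} (U : ι → V → ℝ≥0∞) (k : ℕ) (v : V) :
    ∑' i, launched a b q (U i) k v = launched a b q (fun u => ∑' i, U i u) k v := by
  induction k generalizing v with
  | zero => rfl
  | succ k ih => simp only [launched, ENNReal.tsum_mul_left, ← transfer_tsum, ih]

lemma tsum_launched_single (k : ℕ) (v : V) :
    ∑' x, launched a b q (Pi.single x (ν₁ x)) k v = launched a b q ν₁ k v := by
  rw [launched_tsum]
  congr
  funext u
  simp [Pi.single_apply]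

lemma launched_single_le (x : V) (k : ℕ) (v : V) :
    launched a b q (Pi.single x (ν₁ x)) k v ≤ launched a b q ν₁ k v :=
  (ENNReal.le_tsum (f := fun x => launched a b q (Pi.single x (ν₁ x)) k v) x).trans_eq
    (tsum_launched_single k v)

lemma keepRate_mul_le {v : V} {t : ℝ≥0∞} (ht : t ≤ massAt b q v) :
    keepRate a b q v * t ≤ min (massAt a q v) (massAt b q v) :=
  calc keepRate a b q v * t ≤ massAt b q v * keepRate a b q v := by rw [mul_comm]; gcongr
    _ ≤ min (massAt a q v) (massAt b q v) := ENNReal.mul_div_le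

include hbal hmin in
lemma sum_range_launched_le (K : ℕ) (v : V) :
    ∑ k ∈ Finset.range K, launched a b q ν₁ k v ≤ massAt a q v := by
  induction K generalizing v with
  | zero => simp
  | succ K ih =>
    rw [Finset.sum_range_succ']
    simp only [launched]
    rw [← Finset.mul_sum, ← transfer_sum, add_comm]
    calc _ ≤ ν₁ v + min (massAt a q v) (massAt b q v) := by
          gcongr; exact keepRate_mul_le (transfer_le_massAt ih v)
      _ = massAt a q v := add_min_eq_of_add_eq_add (hmin v) (hbal v)

include hbal hmin in
lemma tsum_launched_le (v : V) : ∑' k, launched a b q ν₁ k v ≤ massAt a q v := by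
  rw [ENNReal.tsum_eq_iSup_nat]
  exact iSup_le fun K => sum_range_launched_le hbal hmin K v

include hbal hmin in
lemma launched_single_le_massAt (x : V) (k : ℕ) (v : V) :
    launched a b q (Pi.single x (ν₁ x)) k v ≤ massAt a q v :=
  (launched_single_le x k v).trans ((ENNReal.le_tsum k).trans (tsum_launched_le hbal hmin v))

include hq hbal hmin in
lemma tsum_tsum_launched_single_ne_top (x : V) :
    ∑' k, ∑' v, launched a b q (Pi.single x (ν₁ x)) k v ≠ ⊤ := by
  refine ne_top_of_le_ne_top hq ?_
  calc ∑' k, ∑' v, launched a b q (Pi.single x (ν₁ x)) k v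
      ≤ ∑' v, ∑' k, launched a b q ν₁ k v := by
        rw [ENNReal.tsum_comm]
        exact ENNReal.tsum_le_tsum fun v => ENNReal.tsum_le_tsum fun k => launched_single_le x k v
    _ ≤ ∑' v, massAt a q v := ENNReal.tsum_le_tsum (tsum_launched_le hbal hmin)
    _ = ∑' n, q n := tsum_massAt a q

include hq hbal hmin in
lemma keepRate_mul_add_div_mul {v : V} {t : ℝ≥0∞} (ht : t ≤ massAt b q v) :
    keepRate a b q v * t + ν₂ v / massAt b q v * t = t := by
  rcases eq_or_ne (massAt b q v) 0 with h0 | h0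
  · simp [le_antisymm (h0 ▸ ht) zero_le]
  · have hν₂ : ν₂ v + min (massAt b q v) (massAt a q v) = massAt b q v :=
      add_min_eq_of_add_eq_add (by rw [min_comm]; exact hmin v) (hbal v).symm
    rw [keepRate, ← add_mul, ENNReal.div_add_div_same, add_comm, min_comm, hν₂,
      ENNReal.div_self h0 (ne_top_of_le_ne_top hq (massAt_le_tsum b q v)), one_mul]

include hq hbal hmin in
lemma tsum_keep_add_tsum_absorb {U : V → ℝ≥0∞} (hU : ∀ v, U v ≤ massAt a q v) :
    ∑' v, keepRate a b q v * transfer a b q U v +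
      ∑' v, ν₂ v / massAt b q v * transfer a b q U v = ∑' v, U v := by
  rw [← ENNReal.tsum_add,
    tsum_congr fun v => keepRate_mul_add_div_mul hq hbal hmin (transfer_le_massAt hU v),
    tsum_transfer hq hU]

variable (a b q ν₁ ν₂) in
/-- Mass started at `x` and stopped at `y`. -/
noncomputable def transportPlan (x y : V) : ℝ≥0∞ :=
  ∑' k, ν₂ y / massAt b q y * transfer a b q (launched a b q (Pi.single x (ν₁ x)) k) y

include hq hbal hmin in
lemma tsum_transportPlan_right (x : V) : ∑' y, transportPlan a b q ν₁ ν₂ x y = ν₁ x := by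
  simp only [transportPlan]
  rw [ENNReal.tsum_comm]
  refine (ENNReal.tsum_eq_of_succ_add_eq (fun k => ?_)
    (tsum_tsum_launched_single_ne_top hq hbal hmin x)).trans (by simp [launched])
  exact tsum_keep_add_tsum_absorb hq hbal hmin (launched_single_le_massAt hbal hmin x k)

include hbal hmin in
lemma tsum_transportPlan_left_le (y : V) : ∑' x, transportPlan a b q ν₁ ν₂ x y ≤ ν₂ y :=
  calc ∑' x, transportPlan a b q ν₁ ν₂ x y
      = ν₂ y / massAt b q y * transfer a b q (fun u => ∑' k, launched a b q ν₁ k u) y := by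
        simp only [transportPlan, ENNReal.tsum_mul_left]
        rw [ENNReal.tsum_comm]
        simp only [← transfer_tsum, tsum_launched_single]
    _ ≤ ν₂ y / massAt b q y * massAt b q y := by
        gcongr; exact transfer_le_massAt (tsum_launched_le hbal hmin) y
    _ ≤ ν₂ y := by rw [mul_comm]; exact ENNReal.mul_div_le

include hq hbal in
lemma tsum_eq_tsum_of_balance : ∑' v, ν₁ v = ∑' v, ν₂ v := by
  have h := congrArg tsum (funext hbal)
  simp only [ENNReal.tsum_add, tsum_massAt] at h
  exact (ENNReal.add_left_inj hq).mp h

include hq hbal hmin in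
lemma tsum_transportPlan_left (y : V) : ∑' x, transportPlan a b q ν₁ ν₂ x y = ν₂ y := by
  refine ENNReal.eq_of_le_of_tsum_eq (tsum_transportPlan_left_le hbal hmin) ?_ ?_ y
  · rw [ENNReal.tsum_comm, tsum_congr (tsum_transportPlan_right hq hbal hmin),
      tsum_eq_tsum_of_balance hq hbal]
  · rw [← tsum_eq_tsum_of_balance hq hbal]
    refine ne_top_of_le_ne_top hq ((ENNReal.tsum_le_tsum fun v => ?_).trans_eq (tsum_massAt a q))
    rw [← add_min_eq_of_add_eq_add (hmin v) (hbal v)]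
    exact le_self_add

include hR in
lemma reflTransGen_of_launched_ne_zero {x v : V} {k : ℕ}
    (h : launched a b q (Pi.single x (ν₁ x)) k v ≠ 0) : Relation.ReflTransGen R x v := by
  induction k generalizing v with
  | zero =>
    obtain rfl : v = x := by by_contra hvx; simp [launched, hvx] at h
    exact .refl
  | succ k ih => exact reflTransGen_of_transfer_ne_zero hR (fun _ => ih) (right_ne_zero_of_mul h)

include hR in
lemma reflTransGen_of_transportPlan_ne_zero {x y : V} (h : transportPlan a b q ν₁ ν₂ x y ≠ 0) :
    Relation.ReflTransGen R x y := by
  obtain ⟨k, hk⟩ : ∃ k, ν₂ y / massAt b q y *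
      transfer a b q (launched a b q (Pi.single x (ν₁ x)) k) y ≠ 0 := by
    by_contra! hall
    exact h (ENNReal.tsum_eq_zero.mpr hall)
  exact reflTransGen_of_transfer_ne_zero hR (fun _ => reflTransGen_of_launched_ne_zero hR)
    (right_ne_zero_of_mul hk)

include hq hbal hmin hR in
theorem exists_transport_of_balance :
    ∃ ρ : V → V → ℝ≥0∞, (∀ x, ∑' y, ρ x y = ν₁ x) ∧ (∀ y, ∑' x, ρ x y = ν₂ y) ∧
      ∀ x y, ρ x y ≠ 0 → Relation.ReflTransGen R x y :=
  ⟨transportPlan a b q ν₁ ν₂, tsum_transportPlan_right hq hbal hmin,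
    tsum_transportPlan_left hq hbal hmin, fun _ _ => reflTransGen_of_transportPlan_ne_zero hR⟩

end Transport

section Paths

lemma pathEdges_cons_cons (v w : V) (t : List V) :
    pathEdges (v :: w :: t) = (v, w) :: pathEdges (w :: t) := rfl

lemma fst_mem_of_mem_pathEdges {l : List V} {e : V × V} (h : e ∈ pathEdges l) : e.1 ∈ l :=
  (List.of_mem_zip h).1

lemma isChain_mem_pathEdges : ∀ l : List V, l.IsChain fun u v => (u, v) ∈ pathEdges l
  | [] => .nil
  | [_] => .singleton _
  | v :: w :: t => .cons_cons (by simp [pathEdges_cons_cons])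
      ((isChain_mem_pathEdges (w :: t)).imp fun _ _ h => by simp [pathEdges_cons_cons, h])

noncomputable def outCount (l : List V) (x : V) : ℝ≥0∞ :=
  ∑' y, if (x, y) ∈ pathEdges l then 1 else 0

noncomputable def inCount (l : List V) (x : V) : ℝ≥0∞ :=
  ∑' y, if (y, x) ∈ pathEdges l then 1 else 0

lemma tsum_ite_mem_cons {α β : Type*} [BEq α] [LawfulBEq α] {e : α} {L : List α} (he : e ∉ L)
    (f : β → α) :
    ∑' y, (if f y ∈ e :: L then (1 : ℝ≥0∞) else 0) =
      ∑' y, (if f y = e then 1 else 0) + ∑' y, (if f y ∈ L then 1 else 0) := by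
  rw [← ENNReal.tsum_add]
  refine tsum_congr fun y => ?_
  by_cases h : f y = e
  · simp [h, he]
  · simp [h]

lemma outCount_cons_cons {v w : V} {t : List V} (hv : v ∉ w :: t) (x : V) :
    outCount (v :: w :: t) x = (if v = x then 1 else 0) + outCount (w :: t) x := by
  rw [outCount, pathEdges_cons_cons,
    tsum_ite_mem_cons (fun h => hv (fst_mem_of_mem_pathEdges h)) fun y => (x, y)]
  congr 1
  by_cases h : v = x
  · subst h; simp
  · simp [h, Ne.symm h]

lemma inCount_cons_cons {v w : V} {t : List V} (hv : v ∉ w :: t) (x : V) :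
    inCount (v :: w :: t) x = (if w = x then 1 else 0) + inCount (w :: t) x := by
  rw [inCount, pathEdges_cons_cons,
    tsum_ite_mem_cons (fun h => hv (fst_mem_of_mem_pathEdges h)) fun y => (y, x)]
  congr 1
  by_cases h : w = x
  · subst h; simp
  · simp [h, Ne.symm h]

lemma outCount_eq_zero_of_not_mem {l : List V} {x : V} (h : x ∉ l) : outCount l x = 0 :=
  ENNReal.tsum_eq_zero.mpr fun _ => if_neg fun he => h (fst_mem_of_mem_pathEdges he)

lemma outCount_le_one : ∀ {l : List V}, l.Nodup → ∀ x, outCount l x ≤ 1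
  | [], _, x => by simp [outCount, pathEdges]
  | [_], _, x => by simp [outCount, pathEdges]
  | v :: w :: t, hl, x => by
    rw [outCount_cons_cons (List.nodup_cons.mp hl).1]
    by_cases h : v = x
    · subst h
      simp [outCount_eq_zero_of_not_mem (List.nodup_cons.mp hl).1]
    · simpa [h] using outCount_le_one hl.of_cons x

lemma outCount_add_getLast_eq_inCount_add_head : ∀ {l : List V}, l.Nodup → ∀ x,
    outCount l x + (if l.getLast? = some x then 1 else 0) =
      inCount l x + (if l.head? = some x then 1 else 0)
  | [], _, x => by simp [outCount, inCount, pathEdges]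
  | [_], _, x => by simp [outCount, inCount, pathEdges]
  | v :: w :: t, hl, x => by
    have ih := outCount_add_getLast_eq_inCount_add_head hl.of_cons x
    simp only [List.head?_cons, Option.some.injEq] at ih ⊢
    rw [outCount_cons_cons (List.nodup_cons.mp hl).1, inCount_cons_cons (List.nodup_cons.mp hl).1,
      List.getLast?_cons_cons, add_assoc, ih]
    ring

end Paths

lemma pathFlow_apply (l : List V) (e : V × V) :
    pathFlow l e = if e ∈ pathEdges l then 1 else 0 := by
  simp [pathFlow, Set.indicator_apply]

lemma pathFlow_nonneg (l : List V) (e : V × V) : 0 ≤ pathFlow l e := by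
  rw [pathFlow_apply]; split_ifs <;> simp

lemma pathFlow_le_one (l : List V) (e : V × V) : pathFlow l e ≤ 1 := by
  rw [pathFlow_apply]; split_ifs <;> simp

lemma divergence_eq_toReal_sub {Q : V × V → ℝ} (hQ : ∀ e, 0 ≤ Q e) (x : V) :
    divergence Q x = (∑' y, ENNReal.ofReal (Q (x, y))).toReal -
      (∑' y, ENNReal.ofReal (Q (y, x))).toReal := by
  simp only [divergence, ENNReal.tsum_toReal_eq fun _ => ENNReal.ofReal_ne_top,
    ENNReal.toReal_ofReal (hQ _)]

lemma ofReal_sub_add_eq {A B : ℝ≥0∞} (hA : A ≠ ⊤) (hB : B ≠ ⊤) {s t : ℝ}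
    (h : A.toReal - B.toReal = s - t) :
    ENNReal.ofReal (s - t) + B = ENNReal.ofReal (t - s) + A := by
  rw [← ENNReal.ofReal_toReal hA, ← ENNReal.ofReal_toReal hB]
  rcases le_total t s with hts | hst
  · rw [ENNReal.ofReal_of_nonpos (show t - s ≤ 0 by linarith), zero_add,
      ← ENNReal.ofReal_add (by linarith) ENNReal.toReal_nonneg]
    congr 1
    linarith
  · rw [ENNReal.ofReal_of_nonpos (show s - t ≤ 0 by linarith), zero_add,
      ← ENNReal.ofReal_add (by linarith) ENNReal.toReal_nonneg]
    congr 1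
    linarith

lemma massAt_eq_tsum_mul_ite {a : ℕ → V} {o : ℕ → Option V} (ha : ∀ n, o n = some (a n))
    (g : ℕ → ℝ≥0∞) (x : V) : massAt a g x = ∑' n, g n * if o n = some x then 1 else 0 :=
  tsum_congr fun n => by simp [ha n]

section Decomposition

variable {γ : ℕ → List V} {q : ℕ → ℝ} {Q : V × V → ℝ} (hq0 : ∀ n, 0 ≤ q n) (hqs : Summable q)
  (hQ : ∀ e, Q e = ∑' n, q n * pathFlow (γ n) e)

include hq0 hqs in
lemma tsum_ofReal_ne_top : ∑' n, ENNReal.ofReal (q n) ≠ ⊤ := by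
  rw [← ENNReal.ofReal_tsum_of_nonneg hq0 hqs]
  exact ENNReal.ofReal_ne_top

include hq0 hQ in
lemma nonneg_of_decomposition (e : V × V) : 0 ≤ Q e :=
  hQ e ▸ tsum_nonneg fun n => mul_nonneg (hq0 n) (pathFlow_nonneg _ _)

include hq0 hqs in
lemma summable_mul_pathFlow (e : V × V) : Summable fun n => q n * pathFlow (γ n) e :=
  hqs.of_nonneg_of_le (fun n => mul_nonneg (hq0 n) (pathFlow_nonneg _ _))
    fun n => mul_le_of_le_one_right (hq0 n) (pathFlow_le_one _ _)

include hq0 hqs hQ in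
lemma le_of_mem_pathEdges {n : ℕ} {e : V × V} (he : e ∈ pathEdges (γ n)) : q n ≤ Q e := by
  rw [hQ]
  simpa [pathFlow_apply, he] using (summable_mul_pathFlow (γ := γ) hq0 hqs e).le_tsum n
    fun m _ => mul_nonneg (hq0 m) (pathFlow_nonneg _ _)

include hq0 hqs hQ in
lemma ofReal_eq_tsum_of_decomposition (e : V × V) :
    ENNReal.ofReal (Q e) = ∑' n, ENNReal.ofReal (q n) * if e ∈ pathEdges (γ n) then 1 else 0 := by
  rw [hQ, ENNReal.ofReal_tsum_of_nonneg (fun n => mul_nonneg (hq0 n) (pathFlow_nonneg _ _))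
    (summable_mul_pathFlow hq0 hqs e)]
  exact tsum_congr fun n => by rw [ENNReal.ofReal_mul (hq0 n), pathFlow_apply]; split_ifs <;> simp

include hq0 hqs hQ in
lemma tsum_ofReal_out (x : V) :
    ∑' y, ENNReal.ofReal (Q (x, y)) = ∑' n, ENNReal.ofReal (q n) * outCount (γ n) x := by
  simp only [ofReal_eq_tsum_of_decomposition hq0 hqs hQ, outCount, ← ENNReal.tsum_mul_left]
  exact ENNReal.tsum_comm

include hq0 hqs hQ in
lemma tsum_ofReal_in (x : V) :
    ∑' y, ENNReal.ofReal (Q (y, x)) = ∑' n, ENNReal.ofReal (q n) * inCount (γ n) x := by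
  simp only [ofReal_eq_tsum_of_decomposition hq0 hqs hQ, inCount, ← ENNReal.tsum_mul_left]
  exact ENNReal.tsum_comm

include hq0 hqs hQ in
lemma reflTransGen_head_getLast {n : ℕ} (hne : γ n ≠ []) (hn : 0 < q n) :
    Relation.ReflTransGen (fun u v => 0 < Q (u, v)) ((γ n).head hne) ((γ n).getLast hne) :=
  List.relationReflTransGen_of_exists_isChain _ ((isChain_mem_pathEdges (γ n)).imp
    fun _ _ he => hn.trans_le (le_of_mem_pathEdges hq0 hqs hQ he)) hne

variable {a b : ℕ → V} (ha : ∀ n, (γ n).head? = some (a n))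
  (hb : ∀ n, (γ n).getLast? = some (b n)) (hnd : ∀ n, (γ n).Nodup)

include hq0 hqs hQ ha hb hnd in
lemma tsum_out_add_massAt_eq (x : V) :
    ∑' y, ENNReal.ofReal (Q (x, y)) + massAt b (fun n => ENNReal.ofReal (q n)) x =
      ∑' y, ENNReal.ofReal (Q (y, x)) + massAt a (fun n => ENNReal.ofReal (q n)) x := by
  rw [tsum_ofReal_out hq0 hqs hQ, tsum_ofReal_in hq0 hqs hQ, massAt_eq_tsum_mul_ite hb,
    massAt_eq_tsum_mul_ite ha, ← ENNReal.tsum_add, ← ENNReal.tsum_add]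
  exact tsum_congr fun n => by
    rw [← mul_add, ← mul_add, outCount_add_getLast_eq_inCount_add_head (hnd n)]

include hq0 hqs hQ ha hb hnd in
lemma balance_of_decomposition {μ₁ μ₂ : V → ℝ} (hdiv : ∀ x, divergence Q x = μ₁ x - μ₂ x)
    (x : V) :
    ENNReal.ofReal (μ₁ x - μ₂ x) + massAt b (fun n => ENNReal.ofReal (q n)) x =
      ENNReal.ofReal (μ₂ x - μ₁ x) + massAt a (fun n => ENNReal.ofReal (q n)) x := by
  have hbal := tsum_out_add_massAt_eq hq0 hqs hQ ha hb hnd x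
  have hw := tsum_ofReal_ne_top hq0 hqs
  have hα := ne_top_of_le_ne_top hw (massAt_le_tsum a _ x)
  have hβ := ne_top_of_le_ne_top hw (massAt_le_tsum b _ x)
  have hout : ∑' y, ENNReal.ofReal (Q (x, y)) ≠ ⊤ := by
    refine ne_top_of_le_ne_top hw ?_
    rw [tsum_ofReal_out hq0 hqs hQ]
    exact ENNReal.tsum_le_tsum fun n => mul_le_of_le_one_right' (outCount_le_one (hnd n) x)
  have hin : ∑' y, ENNReal.ofReal (Q (y, x)) ≠ ⊤ :=
    ne_top_of_le_ne_top (ENNReal.add_ne_top.mpr ⟨hout, hβ⟩) (hbal ▸ le_self_add)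
  have hreal := congrArg ENNReal.toReal hbal
  rw [ENNReal.toReal_add hout hβ, ENNReal.toReal_add hin hα] at hreal
  have hdivx := hdiv x
  rw [divergence_eq_toReal_sub (nonneg_of_decomposition hq0 hQ)] at hdivx
  exact ofReal_sub_add_eq hα hβ (by linarith)

end Decomposition

lemma hasSum_toReal_of_tsum_eq_ofReal {α : Type*} {f : α → ℝ≥0∞} {c : ℝ}
    (h : ∑' i, f i = ENNReal.ofReal c) : HasSum (fun i => (f i).toReal) (max c 0) := by
  have hf : ∀ i, f i ≠ ⊤ := ENNReal.ne_top_of_tsum_ne_top (h ▸ ENNReal.ofReal_ne_top)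
  have := ENNReal.hasSum_toReal (h ▸ ENNReal.ofReal_ne_top)
  rwa [← ENNReal.tsum_toReal_eq hf, h, ENNReal.toReal_ofReal'] at this

lemma min_ofReal_sub_ofReal_sub (s t : ℝ) :
    min (ENNReal.ofReal (s - t)) (ENNReal.ofReal (t - s)) = 0 := by
  rcases le_total s t with h | h
  · simp [ENNReal.ofReal_of_nonpos (show s - t ≤ 0 by linarith)]
  · simp [ENNReal.ofReal_of_nonpos (show t - s ≤ 0 by linarith)]

lemma max_sub_zero_add_min (s t : ℝ) : max (s - t) 0 + min s t = s := by
  rcases le_total s t with h | h <;> simp [h]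

lemma tsum_max_sub_zero {μ₁ μ₂ : V → ℝ} (h₁ : HasSum μ₁ 1) (h₂ : HasSum μ₂ 1) :
    ∑' x, max (μ₁ x - μ₂ x) 0 = 1 / 2 * ∑' x, |μ₁ x - μ₂ x| := by
  have hd : HasSum (fun x => μ₁ x - μ₂ x) 0 := by simpa using h₁.sub h₂
  have hpos : ∀ x, max (μ₁ x - μ₂ x) 0 = 1 / 2 * ((μ₁ x - μ₂ x) + |μ₁ x - μ₂ x|) := fun x => by
    rcases le_total 0 (μ₁ x - μ₂ x) with h | h
    · rw [max_eq_left h, abs_of_nonneg h]; ring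
    · rw [max_eq_right h, abs_of_nonpos h]; ring
  rw [tsum_congr hpos, tsum_mul_left, Summable.tsum_add hd.summable hd.summable.abs, hd.tsum_eq,
    zero_add]

theorem exists_coupling_of_transport {μ₁ μ₂ : V → ℝ} (h₁ : IsProb μ₁) (h₂ : IsProb μ₂)
    {ρ : V → V → ℝ≥0∞} (hrow : ∀ x, ∑' y, ρ x y = ENNReal.ofReal (μ₁ x - μ₂ x))
    (hcol : ∀ y, ∑' x, ρ x y = ENNReal.ofReal (μ₂ y - μ₁ y)) :
    ∃ π : V × V → ℝ, IsCoupling μ₁ μ₂ π ∧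
      ∑' p : V × V, Set.indicator {p : V × V | p.1 ≠ p.2} π p = 1 / 2 * ∑' x, |μ₁ x - μ₂ x| ∧
      ∀ p : V × V, p.1 ≠ p.2 → π p = (ρ p.1 p.2).toReal := by
  have hρ : ∀ x y, ρ x y ≠ ⊤ := fun x y =>
    ne_top_of_le_ne_top ENNReal.ofReal_ne_top ((ENNReal.le_tsum y).trans_eq (hrow x))
  have hdiag : ∀ x, ρ x x = 0 := fun x =>
    le_antisymm ((le_min ((ENNReal.le_tsum x).trans_eq (hrow x))
      ((ENNReal.le_tsum (f := fun x' => ρ x' x) x).trans_eq (hcol x))).trans_eq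
        (min_ofReal_sub_ofReal_sub _ _)) zero_le
  refine ⟨fun p => (ρ p.1 p.2).toReal + if p.2 = p.1 then min (μ₁ p.1) (μ₂ p.1) else 0,
    ⟨fun p => ?_, fun x => ?_, fun y => ?_⟩, ?_, fun p hp => by simp [Ne.symm hp]⟩
  · refine add_nonneg ENNReal.toReal_nonneg ?_
    split_ifs
    exacts [le_min (h₁.1 _) (h₂.1 _), le_rfl]
  · convert (hasSum_toReal_of_tsum_eq_ofReal (hrow x)).add (hasSum_ite_eq x (min (μ₁ x) (μ₂ x)))
    exact (max_sub_zero_add_min _ _).symm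
  · convert (hasSum_toReal_of_tsum_eq_ofReal (hcol y)).add (hasSum_ite_eq y (min (μ₁ y) (μ₂ y)))
      using 1
    · funext x
      by_cases h : x = y
      · subst h; simp
      · simp [h, Ne.symm h]
    · rw [min_comm, max_sub_zero_add_min]
  · calc ∑' p : V × V, Set.indicator {p : V × V | p.1 ≠ p.2}
          (fun p => (ρ p.1 p.2).toReal + if p.2 = p.1 then min (μ₁ p.1) (μ₂ p.1) else 0) p
        = ∑' p : V × V, (ρ p.1 p.2).toReal := tsum_congr fun p => by
          by_cases hp : p.1 = p.2
          · simp [hp, hdiag]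
          · simp [hp, Ne.symm hp]
      _ = (∑' x, ENNReal.ofReal (μ₁ x - μ₂ x)).toReal := by
          rw [← ENNReal.tsum_toReal_eq (f := fun p : V × V => ρ p.1 p.2) fun p => hρ p.1 p.2,
            ENNReal.tsum_prod, tsum_congr hrow]
      _ = ∑' x, max (μ₁ x - μ₂ x) 0 := by
          simp [ENNReal.tsum_toReal_eq fun _ => ENNReal.ofReal_ne_top, ENNReal.toReal_ofReal']
      _ = 1 / 2 * ∑' x, |μ₁ x - μ₂ x| := tsum_max_sub_zero h₁.2 h₂.2

end EconomicCoupling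

open EconomicCoupling

theorem fin_dec_flow_gives_economic_coupling_general {V : Type*}
    (E : Set (V × V))
    (Q : V × V → ℝ) (hfd : FinDecomposable E Q)
    (μ₁ μ₂ : V → ℝ) (h₁ : IsProb μ₁) (h₂ : IsProb μ₂)
    (hdiv : ∀ x, divergence Q x = μ₁ x - μ₂ x) :
    ∃ ρ : V × V → ℝ, IsCoupling μ₁ μ₂ ρ ∧
      (∑' p : V × V, Set.indicator {p : V × V | p.1 ≠ p.2} ρ p) =
        (1 / 2) * (∑' x, |μ₁ x - μ₂ x|) ∧
      ∀ p : V × V, p.1 ≠ p.2 →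
        ¬ Relation.TransGen (fun a b => 0 < Q (a, b)) p.1 p.2 → ρ p = 0 := by
  obtain ⟨γ, q, hγ, hnd, hq0, hqs, hQ⟩ := hfd
  have hbal := balance_of_decomposition hq0 hqs hQ (fun n => List.head?_eq_some_head (hγ n).1)
    (fun n => List.getLast?_eq_some_getLast (hγ n).1) hnd hdiv
  obtain ⟨ρ, hrow, hcol, hsupp⟩ := exists_transport_of_balance (tsum_ofReal_ne_top hq0 hqs) hbal
    (fun x => min_ofReal_sub_ofReal_sub _ _) fun n hn =>
    reflTransGen_head_getLast hq0 hqs hQ (hγ n).1 (ENNReal.ofReal_pos.mp (pos_iff_ne_zero.mpr hn))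
  obtain ⟨π, hπ, hmass, hoff⟩ := exists_coupling_of_transport h₁ h₂ hrow hcol
  refine ⟨π, hπ, hmass, fun p hne hnot => ?_⟩
  rw [hoff p hne, ENNReal.toReal_eq_zero_iff]
  by_contra! hρ
  rcases Relation.reflTransGen_iff_eq_or_transGen.mp (hsupp p.1 p.2 hρ.1) with h | h
  exacts [hne h.symm, hnot h]

/-- **Economic coupling from a finitely decomposable acyclic flow, infinite case.**
Given a finitely decomposable acyclic flow `Q` on an infinite countable digraph with
`div Q = μ₁ - μ₂`, there is a coupling `ρ` of `μ₁, μ₂` moving the minimal total mass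
`½ ∑ₓ |μ₁(x) - μ₂(x)|` and supported on pairs joined by a directed path in `(V, E(Q))`. -/
theorem fin_dec_flow_gives_economic_coupling {V : Type*} [Countable V] [Infinite V]
    (E : Set (V × V)) (hloop : ∀ x : V, (x, x) ∉ E)
    (Q : V × V → ℝ) (hQ : IsFlow E Q) (hfd : FinDecomposable E Q)
    (hacyc : AcyclicRel fun a b => 0 < Q (a, b))
    (μ₁ μ₂ : V → ℝ) (h₁ : IsProb μ₁) (h₂ : IsProb μ₂)
    (hdiv : ∀ x, divergence Q x = μ₁ x - μ₂ x) :
    ∃ ρ : V × V → ℝ, IsCoupling μ₁ μ₂ ρ ∧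
      (∑' p : V × V, Set.indicator {p : V × V | p.1 ≠ p.2} ρ p) =
        (1 / 2) * (∑' x, |μ₁ x - μ₂ x|) ∧
      ∀ p : V × V, p.1 ≠ p.2 →
        ¬ Relation.TransGen (fun a b => 0 < Q (a, b)) p.1 p.2 → ρ p = 0 :=
  fin_dec_flow_gives_economic_coupling_general E Q hfd μ₁ μ₂ h₁ h₂ hdiv
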